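/- Define S_0 = i[[[V_0,Λ_1],Λ_2],L_0], S_1 = i[[[V_1,Λ_2],Λ_0],L_1], S_2 = i[[[V_2,Λ_0],Λ_1],L_2] as operators on the complexified exterior algebra Λ*W⊗ℂ. Then S_0 + S_1 + S_2 = 0 on the 6-dimensional J-eigenspace V spanned by w_0∧w_1, w_0∧w_2, w_1∧w_2, w_0∧w_1∧w_2∧w̄_0, w_0∧w_1∧w_2∧w̄_1, w_0∧w_1∧w_2∧w̄_2. -/

import Mathlib

/-- Index set for the orthonormal basis `v_{ij}`, `i ∈ {1,2}`, `j ∈ {0,1,2}`: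
`(0, j)` stands for `v_{1j}` and `(1, j)` for `v_{2j}`. -/
abbrev Idx := Fin 2 × Fin 3

/-- A linear order key on the index set. -/
def key (a : Idx) : ℕ := a.1.val * 3 + a.2.val

noncomputable section

/-- Concrete model of the complexified exterior algebra `Λ*W ⊗ ℂ` of the
6-dimensional real inner product space `W` with orthonormal basis `v_{ij}`:
complex-valued functions on subsets of the index set, with the induced
Hermitian inner product (the wedge monomials in the `v_{ij}` are orthonormal). -/
abbrev EWc := EuclideanSpace ℂ (Finset Idx)

/-- The sign `(-1)^{#{b ∈ S | b < a}}`. -/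
def sgnc (a : Idx) (S : Finset Idx) : ℂ :=
  (-1 : ℂ) ^ (S.filter (fun b => key b < key a)).card

/-- `Eop a` is the wedge (exterior multiplication) operator with `v_a`. -/
def Eop (a : Idx) : Module.End ℂ EWc where
  toFun f := WithLp.toLp 2 (fun S => if a ∈ S then sgnc a (S.erase a) * f (S.erase a) else 0)
  map_add' f g := by
    ext S
    by_cases h : a ∈ S <;> simp [h, mul_add]
  map_smul' c f := by
    ext S
    by_cases h : a ∈ S <;> simp [h] <;> ring

/-- `Iop a` is the contraction operator with the vector dual to `v_a`. -/
def Iop (a : Idx) : Module.End ℂ EWc where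
  toFun f := WithLp.toLp 2 (fun S => if a ∈ S then 0 else sgnc a S * f (insert a S))
  map_add' f g := by
    ext S
    by_cases h : a ∈ S <;> simp [h, mul_add]
  map_smul' c f := by
    ext S
    by_cases h : a ∈ S <;> simp [h] <;> ring

/-- `J = Σ_j (E_{2j}I_{1j} - E_{1j}I_{2j})`: the (complexification of the)
derivation of `Λ*W` with `J(v_{1j}) = v_{2j}` and `J(v_{2j}) = -v_{1j}`. -/
def Jop : Module.End ℂ EWc :=
  ∑ j : Fin 3, (Eop (1, j) ∘ₗ Iop (0, j) - Eop (0, j) ∘ₗ Iop (1, j))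

/-- The vacuum (the unit `1 ∈ Λ⁰`). -/
def vac : EWc := WithLp.toLp 2 (fun S => if S = ∅ then 1 else 0)

/-- Wedge operator with `w_j = v_{1j} + i v_{2j}`. -/
def Ew (j : Fin 3) : Module.End ℂ EWc := Eop (0, j) + Complex.I • Eop (1, j)

/-- Wedge operator with `w̄_j = v_{1j} - i v_{2j}`. -/
def Ewb (j : Fin 3) : Module.End ℂ EWc := Eop (0, j) - Complex.I • Eop (1, j)

/-- Contraction operator `I_{w_j} = I_{1j} - i I_{2j}`. -/
def Iw (j : Fin 3) : Module.End ℂ EWc := Iop (0, j) - Complex.I • Iop (1, j)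

/-- Contraction operator `I_{w̄_j} = I_{1j} + i I_{2j}`. -/
def Iwb (j : Fin 3) : Module.End ℂ EWc := Iop (0, j) + Complex.I • Iop (1, j)

/-- The element `w_j = v_{1j} + i v_{2j}` of `Λ¹`. -/
def wv (j : Fin 3) : EWc := Ew j vac

/-- The element `w̄_j = v_{1j} - i v_{2j}` of `Λ¹`. -/
def wbv (j : Fin 3) : EWc := Ewb j vac

/-- `L_0, L_1, L_2`: wedge with `ω_D = v_{11}∧v_{12} + v_{21}∧v_{22}`,
`-ω_2 = -(v_{10}∧v_{12} + v_{20}∧v_{22})`, `ω_1 = v_{10}∧v_{11} + v_{20}∧v_{21}`. -/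
def Lop : Fin 3 → Module.End ℂ EWc
  | 0 => Eop (0, 1) ∘ₗ Eop (0, 2) + Eop (1, 1) ∘ₗ Eop (1, 2)
  | 1 => -(Eop (0, 0) ∘ₗ Eop (0, 2) + Eop (1, 0) ∘ₗ Eop (1, 2))
  | 2 => Eop (0, 0) ∘ₗ Eop (0, 1) + Eop (1, 0) ∘ₗ Eop (1, 1)

/-- `V_j`: wedge with the volume form `v_{1j} ∧ v_{2j}`. -/
def Vop (j : Fin 3) : Module.End ℂ EWc := Eop (0, j) ∘ₗ Eop (1, j)

/-- `Λ_j = L_j*`, Hermitian adjoint. -/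
def Λop (j : Fin 3) : Module.End ℂ EWc := LinearMap.adjoint (Lop j)

/-- `A_j = V_j*`, Hermitian adjoint. -/
def Aop (j : Fin 3) : Module.End ℂ EWc := LinearMap.adjoint (Vop j)

/-- `H_j = [L_j, Λ_j]`. -/
def Hop (j : Fin 3) : Module.End ℂ EWc := ⁅Lop j, Λop j⁆

/-- The six spanning elements `w_0∧w_1, w_0∧w_2, w_1∧w_2,
`w_0∧w_1∧w_2∧w̄_0, w_0∧w_1∧w_2∧w̄_1, w_0∧w_1∧w_2∧w̄_2`. -/
def vvGen : Fin 6 → EWc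
  | 0 => Ew 0 (Ew 1 vac)
  | 1 => Ew 0 (Ew 2 vac)
  | 2 => Ew 1 (Ew 2 vac)
  | 3 => Ew 0 (Ew 1 (Ew 2 (Ewb 0 vac)))
  | 4 => Ew 0 (Ew 1 (Ew 2 (Ewb 1 vac)))
  | 5 => Ew 0 (Ew 1 (Ew 2 (Ewb 2 vac)))

/-- The 6-dimensional subspace `V` of `Λ*W ⊗ ℂ`. -/
def VV : Submodule ℂ EWc := Submodule.span ℂ (Set.range vvGen)

/-- `S_0 = i[[[V_0,Λ_1],Λ_2],L_0]`, and cyclically. -/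
def Sop : Fin 3 → Module.End ℂ EWc
  | 0 => Complex.I • ⁅⁅⁅Vop 0, Λop 1⁆, Λop 2⁆, Lop 0⁆
  | 1 => Complex.I • ⁅⁅⁅Vop 1, Λop 2⁆, Λop 0⁆, Lop 1⁆
  | 2 => Complex.I • ⁅⁅⁅Vop 2, Λop 0⁆, Λop 1⁆, Lop 2⁆

/-!
Every operator involved is an integral combination of the wedge operators `Eop a`, the
contractions `Iop a` and multiplication by `i`; in particular `Λ_j = L_j*` is such a
combination because `Iop a` is the adjoint of `Eop a`. The generators of `V` have Gaussian
integer coordinates in the monomial basis. So all operators restrict to the Gaussian integer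
lattice of the 64-dimensional space, and the identity on the six generators becomes a finite
computation over `ℤ[i]` that the kernel carries out.
-/

theorem Sop_eq (j : Fin 3) :
    Sop j = Complex.I • ⁅⁅⁅Vop j, Λop (j + 1)⁆, Λop (j + 2)⁆, Lop j⁆ := by
  fin_cases j <;> rfl

theorem adjoint_Eop (a : Idx) : LinearMap.adjoint (Eop a) = Iop a := by
  refine ((LinearMap.eq_adjoint_iff _ _).2 fun f g => ?_).symm
  simp only [PiLp.inner_apply, RCLike.inner_apply', Iop, Eop, LinearMap.coe_mk, AddHom.coe_mk,
    apply_ite (starRingEnd ℂ), map_zero, map_mul, ite_mul, mul_ite, zero_mul, mul_zero,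
    Finset.sum_ite, Finset.sum_const_zero, zero_add, add_zero]
  refine Finset.sum_nbij' (insert a) (fun s => s.erase a) ?_ ?_ ?_ ?_ ?_ <;>
    intro s hs <;> simp only [Finset.mem_filter, Finset.mem_univ, true_and] at hs
  · simp
  · simp
  · exact Finset.erase_insert hs
  · exact Finset.insert_erase hs
  · simp [Finset.erase_insert hs, sgnc]
    ring

section Semiconj

variable {R S M N : Type*} [CommRing R] [CommRing S] [AddCommGroup M] [Module R M]
  [AddCommGroup N] [Module S N] {σ : R →+* S} {φ : M →ₛₗ[σ] N}
  {t t' : Module.End R M} {T T' : Module.End S N}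

open Function

theorem LinearMap.semiconj_add (h : Semiconj φ t T) (h' : Semiconj φ t' T') :
    Semiconj φ ⇑(t + t') ⇑(T + T') := fun x => by simp [h x, h' x]

theorem LinearMap.semiconj_sub (h : Semiconj φ t T) (h' : Semiconj φ t' T') :
    Semiconj φ ⇑(t - t') ⇑(T - T') := fun x => by simp [h x, h' x]

theorem LinearMap.semiconj_neg (h : Semiconj φ t T) : Semiconj φ ⇑(-t) ⇑(-T) :=
  fun x => by simp [h x]

theorem LinearMap.semiconj_comp (h : Semiconj φ t T) (h' : Semiconj φ t' T') :
    Semiconj φ ⇑(t ∘ₗ t') ⇑(T ∘ₗ T') := h.comp_right h'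

theorem LinearMap.semiconj_lie (h : Semiconj φ t T) (h' : Semiconj φ t' T') :
    Semiconj φ ⇑⁅t, t'⁆ ⇑⁅T, T'⁆ := by
  simpa only [Ring.lie_def, Module.End.mul_eq_comp] using
    LinearMap.semiconj_sub (LinearMap.semiconj_comp h h') (LinearMap.semiconj_comp h' h)

theorem LinearMap.semiconj_smul (c : R) (h : Semiconj φ t T) :
    Semiconj φ ⇑(c • t) ⇑(σ c • T) :=
  fun x => by simp [h x]

end Semiconj

namespace GaussianModel

abbrev Vec := Finset Idx → GaussianInt

def sgn (a : Idx) (s : Finset Idx) : GaussianInt :=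
  (-1) ^ (s.filter (fun b => key b < key a)).card

def E (a : Idx) : Module.End GaussianInt Vec where
  toFun f s := if a ∈ s then sgn a (s.erase a) * f (s.erase a) else 0
  map_add' f g := by
    funext s
    by_cases h : a ∈ s <;> simp [h, mul_add]
  map_smul' c f := by
    funext s
    by_cases h : a ∈ s <;> simp [h] <;> ring

def I (a : Idx) : Module.End GaussianInt Vec where
  toFun f s := if a ∈ s then 0 else sgn a s * f (insert a s)
  map_add' f g := by
    funext s
    by_cases h : a ∈ s <;> simp [h, mul_add]
  map_smul' c f := by
    funext s
    by_cases h : a ∈ s <;> simp [h] <;> ring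

def L : Fin 3 → Module.End GaussianInt Vec
  | 0 => E (0, 1) ∘ₗ E (0, 2) + E (1, 1) ∘ₗ E (1, 2)
  | 1 => -(E (0, 0) ∘ₗ E (0, 2) + E (1, 0) ∘ₗ E (1, 2))
  | 2 => E (0, 0) ∘ₗ E (0, 1) + E (1, 0) ∘ₗ E (1, 1)

def Λ : Fin 3 → Module.End GaussianInt Vec
  | 0 => I (0, 2) ∘ₗ I (0, 1) + I (1, 2) ∘ₗ I (1, 1)
  | 1 => -(I (0, 2) ∘ₗ I (0, 0) + I (1, 2) ∘ₗ I (1, 0))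
  | 2 => I (0, 1) ∘ₗ I (0, 0) + I (1, 1) ∘ₗ I (1, 0)

def V (j : Fin 3) : Module.End GaussianInt Vec := E (0, j) ∘ₗ E (1, j)

def S (j : Fin 3) : Module.End GaussianInt Vec :=
  (Zsqrtd.sqrtd : GaussianInt) • ⁅⁅⁅V j, Λ (j + 1)⁆, Λ (j + 2)⁆, L j⁆

def vac : Vec := fun s => if s = ∅ then 1 else 0

def Ew (j : Fin 3) : Module.End GaussianInt Vec :=
  E (0, j) + (Zsqrtd.sqrtd : GaussianInt) • E (1, j)

def Ewb (j : Fin 3) : Module.End GaussianInt Vec :=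
  E (0, j) - (Zsqrtd.sqrtd : GaussianInt) • E (1, j)

def toEWc : Vec →ₛₗ[GaussianInt.toComplex] EWc where
  toFun f := WithLp.toLp 2 fun s => GaussianInt.toComplex (f s)
  map_add' f g := by ext s; simp
  map_smul' c f := by ext s; simp

open Function

theorem semiconj_Eop (a : Idx) : Semiconj toEWc (E a) (Eop a) := fun f => by
  ext s
  by_cases h : a ∈ s <;> simp [toEWc, E, Eop, h, sgn, sgnc]

theorem semiconj_Iop (a : Idx) : Semiconj toEWc (I a) (Iop a) := fun f => by
  ext s
  by_cases h : a ∈ s <;> simp [toEWc, I, Iop, h, sgn, sgnc]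

theorem toComplex_sqrtd : GaussianInt.toComplex Zsqrtd.sqrtd = Complex.I := by
  simp [GaussianInt.toComplex_def]

open LinearMap in
theorem semiconj_Lop (j : Fin 3) : Semiconj toEWc (L j) (Lop j) := by
  have hE := semiconj_Eop
  fin_cases j
  · exact semiconj_add (semiconj_comp (hE _) (hE _)) (semiconj_comp (hE _) (hE _))
  · exact semiconj_neg (semiconj_add (semiconj_comp (hE _) (hE _)) (semiconj_comp (hE _) (hE _)))
  · exact semiconj_add (semiconj_comp (hE _) (hE _)) (semiconj_comp (hE _) (hE _))

open LinearMap in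
theorem semiconj_Λop (j : Fin 3) : Semiconj toEWc (Λ j) (Λop j) := by
  have hI := semiconj_Iop
  fin_cases j <;> simp only [Λ, Λop, Lop, map_add, map_neg, adjoint_comp, adjoint_Eop]
  · exact semiconj_add (semiconj_comp (hI _) (hI _)) (semiconj_comp (hI _) (hI _))
  · exact semiconj_neg (semiconj_add (semiconj_comp (hI _) (hI _)) (semiconj_comp (hI _) (hI _)))
  · exact semiconj_add (semiconj_comp (hI _) (hI _)) (semiconj_comp (hI _) (hI _))

theorem semiconj_Vop (j : Fin 3) : Semiconj toEWc (V j) (Vop j) :=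
  LinearMap.semiconj_comp (semiconj_Eop _) (semiconj_Eop _)

open LinearMap in
theorem semiconj_Sop (j : Fin 3) : Semiconj toEWc (S j) (Sop j) := by
  rw [Sop_eq, ← toComplex_sqrtd]
  exact semiconj_smul _ (semiconj_lie (semiconj_lie (semiconj_lie (semiconj_Vop j)
    (semiconj_Λop _)) (semiconj_Λop _)) (semiconj_Lop j))

theorem semiconj_Ew (j : Fin 3) : Semiconj toEWc (Ew j) (_root_.Ew j) := by
  simpa only [Ew, _root_.Ew, toComplex_sqrtd] using
    LinearMap.semiconj_add (semiconj_Eop _) (LinearMap.semiconj_smul Zsqrtd.sqrtd (semiconj_Eop _))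

theorem semiconj_Ewb (j : Fin 3) : Semiconj toEWc (Ewb j) (_root_.Ewb j) := by
  simpa only [Ewb, _root_.Ewb, toComplex_sqrtd] using
    LinearMap.semiconj_sub (semiconj_Eop _) (LinearMap.semiconj_smul Zsqrtd.sqrtd (semiconj_Eop _))

theorem toEWc_vac : toEWc vac = _root_.vac := by
  ext s
  by_cases h : s = ∅ <;> simp [toEWc, vac, _root_.vac, h]

def gen : Fin 6 → Vec
  | 0 => Ew 0 (Ew 1 vac)
  | 1 => Ew 0 (Ew 2 vac)
  | 2 => Ew 1 (Ew 2 vac)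
  | 3 => Ew 0 (Ew 1 (Ew 2 (Ewb 0 vac)))
  | 4 => Ew 0 (Ew 1 (Ew 2 (Ewb 1 vac)))
  | 5 => Ew 0 (Ew 1 (Ew 2 (Ewb 2 vac)))

theorem toEWc_gen (i : Fin 6) : toEWc (gen i) = vvGen i := by
  fin_cases i <;> simp only [gen, vvGen, (semiconj_Ew _).eq, (semiconj_Ewb _).eq, toEWc_vac]

theorem sum_S_gen_eq_zero (i : Fin 6) : (S 0 + S 1 + S 2) (gen i) = 0 := by
  fin_cases i <;> decide +kernel

end GaussianModel

open GaussianModel in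
theorem sum_Sop_vvGen_eq_zero (i : Fin 6) : (Sop 0 + Sop 1 + Sop 2) (vvGen i) = 0 := by
  rw [← toEWc_gen, ← (LinearMap.semiconj_add (LinearMap.semiconj_add (semiconj_Sop 0)
    (semiconj_Sop 1)) (semiconj_Sop 2)).eq, sum_S_gen_eq_zero, map_zero]

/-- `S_0 + S_1 + S_2 = 0` on the 6-dimensional `J`-eigenspace `V`. -/
theorem S_sum_zero_on_V : ∀ x ∈ VV, (Sop 0 + Sop 1 + Sop 2) x = 0 := by
  have hV : VV ≤ LinearMap.ker (Sop 0 + Sop 1 + Sop 2) :=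
    Submodule.span_le.2 (Set.range_subset_iff.2 sum_Sop_vvGen_eq_zero)
  exact fun x hx => LinearMap.mem_ker.1 (hV hx)
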